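/- arXiv:1711.05664 — 3 statements merged into one kernel-verified Lean document; each statement's English description precedes it below -/
import Mathlib

section
/- There is a constant C, independent of ε, such that for all smooth (u,v) on the closure of Ω with u = v = 0 on {x = 0} ∪ {y = 0} ∪ {y = 2}, the nonlinear terms N₁ := −ε^{3/2+γ}(u ∂_x u + v ∂_y u) and N₂ := −ε^{3/2+γ}(u ∂_x v + v ∂_y v) satisfy |∫_Ω N₁ (u + ∂_x u)| + |∫_Ω N₂ (v + ∂_x v)| + ε^{γ/4} ( ‖N₁‖_{L²(Ω)} + ‖N₂‖_{L²(Ω)} ) ≤ C ε^{γ/2} ( ‖u,v‖_X³ + ‖u,v‖_X² ). -/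
open MeasureTheory Set Real Function

noncomputable section

/-- The channel domain `Ω = (0,L) × (0,2)`. -/
def Omg (L : ℝ) : Set (ℝ × ℝ) := Ioo (0:ℝ) L ×ˢ Ioo (0:ℝ) 2

/-- Partial derivative in the first (x) variable of a curried function. -/
def pdx (f : ℝ → ℝ → ℝ) : ℝ → ℝ → ℝ := fun x y => deriv (fun s => f s y) x

/-- Partial derivative in the second (y) variable of a curried function. -/
def pdy (f : ℝ → ℝ → ℝ) : ℝ → ℝ → ℝ := fun x y => deriv (fun t => f x t) y

/-- Laplacian `Δ = ∂ₓₓ + ∂_{yy}`. -/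
def plap (f : ℝ → ℝ → ℝ) : ℝ → ℝ → ℝ := fun x y => pdx (pdx f) x y + pdy (pdy f) x y

/-- Integral over `Ω`. -/
def intO (L : ℝ) (F : ℝ → ℝ → ℝ) : ℝ := ∫ p in Omg L, F p.1 p.2

/-- `L²(Ω)` norm. -/
def l2 (L : ℝ) (f : ℝ → ℝ → ℝ) : ℝ := Real.sqrt (intO L fun x y => (f x y)^2)

/-- `L^∞(Ω)` (sup) norm. -/
def supO (L : ℝ) (f : ℝ → ℝ → ℝ) : ℝ := sSup ((fun p : ℝ × ℝ => |f p.1 p.2|) '' Omg L)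

/-- `|∇f|²`. -/
def gradSq (f : ℝ → ℝ → ℝ) (x y : ℝ) : ℝ := (pdx f x y)^2 + (pdy f x y)^2

/-- Energy norm `‖u,v‖_E = ‖√ε ∇u‖_{L²(Ω)} + ‖√ε ∇v‖_{L²(Ω)}`. -/
def normE (ε L : ℝ) (u v : ℝ → ℝ → ℝ) : ℝ :=
  Real.sqrt (intO L fun x y => ε * gradSq u x y) + Real.sqrt (intO L fun x y => ε * gradSq v x y)

/-- Positivity norm `‖u,v‖_P = ‖√(u_s) ∇v‖_{L²(Ω)}`. -/
def normP (L : ℝ) (us v : ℝ → ℝ → ℝ) : ℝ :=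
  Real.sqrt (intO L fun x y => us x y * gradSq v x y)

/-- The `X` norm `‖u,v‖_X = ‖u,v‖_E + ε^{γ/2}(‖√ε u‖_∞ + ‖√ε v‖_∞)`. -/
def normX (ε γ L : ℝ) (u v : ℝ → ℝ → ℝ) : ℝ :=
  normE ε L u v + ε ^ (γ/2) *
    (supO L (fun x y => Real.sqrt ε * u x y) + supO L (fun x y => Real.sqrt ε * v x y))

/-- Linearized convection term `S_u`. -/
def Su (us vs u v : ℝ → ℝ → ℝ) (x y : ℝ) : ℝ :=
  us x y * pdx u x y + pdx us x y * u x y + pdy us x y * v x y + vs x y * pdy u x y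

/-- Linearized convection term `S_v`. -/
def Sv (us vs u v : ℝ → ℝ → ℝ) (x y : ℝ) : ℝ :=
  us x y * pdx v x y + pdx vs x y * u x y + vs x y * pdy v x y + pdy vs x y * v x y

/-- The `W^{100,∞}` norm of a function on `(0,2)`. -/
def W100 (h : ℝ → ℝ) : ℝ :=
  sSup { r : ℝ | ∃ j ≤ 100, ∃ y ∈ Ioo (0:ℝ) 2, r = |deriv^[j] h y| }

/-- The nonlinearity `N₁ = -ε^{3/2+γ}(u ∂ₓ u + v ∂_y u)`. -/
def N1 (ε γ : ℝ) (u v : ℝ → ℝ → ℝ) (x y : ℝ) : ℝ :=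
  -(ε ^ ((3:ℝ)/2 + γ)) * (u x y * pdx u x y + v x y * pdy u x y)

/-- The nonlinearity `N₂ = -ε^{3/2+γ}(u ∂ₓ v + v ∂_y v)`. -/
def N2 (ε γ : ℝ) (u v : ℝ → ℝ → ℝ) (x y : ℝ) : ℝ :=
  -(ε ^ ((3:ℝ)/2 + γ)) * (u x y * pdx v x y + v x y * pdy v x y)

lemma omg_meas (L : ℝ) : MeasurableSet (Omg L) := measurableSet_Ioo.prod measurableSet_Ioo

lemma omg_sub {L : ℝ} (hL : L ≤ 1) : Omg L ⊆ Icc (0:ℝ) 1 ×ˢ Icc (0:ℝ) 2 := by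
  rintro ⟨x, y⟩ ⟨⟨hx0, hxL⟩, hy0, hy2⟩
  exact ⟨⟨hx0.le, hxL.le.trans hL⟩, hy0.le, hy2.le⟩

lemma compact_box : IsCompact (Icc (0:ℝ) 1 ×ˢ Icc (0:ℝ) 2) := isCompact_Icc.prod isCompact_Icc

lemma integrableOn_omg {L : ℝ} (hL : L ≤ 1) {f : ℝ × ℝ → ℝ} (hf : Continuous f) :
    IntegrableOn f (Omg L) := by
  exact (hf.continuousOn.integrableOn_compact compact_box).mono_set (omg_sub hL)

lemma finite_omg {L : ℝ} (hL : L ≤ 1) : IsFiniteMeasure (volume.restrict (Omg L)) := by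
  constructor
  rw [Measure.restrict_apply_univ]
  exact lt_of_le_of_lt (measure_mono (omg_sub hL)) compact_box.measure_lt_top

-- derivative lemmas
lemma hasDeriv_x {u : ℝ → ℝ → ℝ} (hu : ContDiff ℝ (⊤ : ℕ∞) (uncurry u)) (x y : ℝ) :
    HasDerivAt (fun s => u s y) (fderiv ℝ (uncurry u) (x, y) (1, 0)) x := by
  have h := ((hu.differentiable (by simp) (x, y)).hasFDerivAt).comp_hasDerivAt x
    ((hasDerivAt_id x).prodMk (hasDerivAt_const x y))
  exact h

lemma hasDeriv_y {u : ℝ → ℝ → ℝ} (hu : ContDiff ℝ (⊤ : ℕ∞) (uncurry u)) (x y : ℝ) :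
    HasDerivAt (fun t => u x t) (fderiv ℝ (uncurry u) (x, y) (0, 1)) y := by
  have h := ((hu.differentiable (by simp) (x, y)).hasFDerivAt).comp_hasDerivAt y
    ((hasDerivAt_const y x).prodMk (hasDerivAt_id y))
  exact h

lemma pdx_eq {u : ℝ → ℝ → ℝ} (hu : ContDiff ℝ (⊤ : ℕ∞) (uncurry u)) (x y : ℝ) :
    pdx u x y = fderiv ℝ (uncurry u) (x, y) (1, 0) := (hasDeriv_x hu x y).deriv

lemma pdy_eq {u : ℝ → ℝ → ℝ} (hu : ContDiff ℝ (⊤ : ℕ∞) (uncurry u)) (x y : ℝ) :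
    pdy u x y = fderiv ℝ (uncurry u) (x, y) (0, 1) := (hasDeriv_y hu x y).deriv

lemma cont_pdx {u : ℝ → ℝ → ℝ} (hu : ContDiff ℝ (⊤ : ℕ∞) (uncurry u)) :
    Continuous fun p : ℝ × ℝ => pdx u p.1 p.2 := by
  have : Continuous fun p : ℝ × ℝ => fderiv ℝ (uncurry u) p (1, 0) :=
    (hu.continuous_fderiv (by simp)).clm_apply continuous_const
  exact this.congr fun p => (pdx_eq hu p.1 p.2).symm

lemma cont_pdy {u : ℝ → ℝ → ℝ} (hu : ContDiff ℝ (⊤ : ℕ∞) (uncurry u)) :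
    Continuous fun p : ℝ × ℝ => pdy u p.1 p.2 := by
  have : Continuous fun p : ℝ × ℝ => fderiv ℝ (uncurry u) p (0, 1) :=
    (hu.continuous_fderiv (by simp)).clm_apply continuous_const
  exact this.congr fun p => (pdy_eq hu p.1 p.2).symm

lemma cont_u {u : ℝ → ℝ → ℝ} (hu : ContDiff ℝ (⊤ : ℕ∞) (uncurry u)) :
    Continuous fun p : ℝ × ℝ => u p.1 p.2 := hu.continuous

-- General Cauchy–Schwarz for bounded measurable functions on a finite measure
lemma my_cs {α : Type*} [MeasurableSpace α] {μ : Measure α} [IsFiniteMeasure μ] {f g : α → ℝ}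
    (hf : AEStronglyMeasurable f μ) (hg : AEStronglyMeasurable g μ)
    {Cf Cg : ℝ} (hbf : ∀ᵐ x ∂μ, |f x| ≤ Cf) (hbg : ∀ᵐ x ∂μ, |g x| ≤ Cg) :
    |∫ x, f x * g x ∂μ| ≤ Real.sqrt (∫ x, (f x) ^ 2 ∂μ) * Real.sqrt (∫ x, (g x) ^ 2 ∂μ) := by
  have hpq : Real.HolderConjugate 2 2 := Real.HolderConjugate.two_two
  have hf2 : MemLp f (ENNReal.ofReal 2) μ :=
    MemLp.of_bound hf Cf (by simpa [Real.norm_eq_abs] using hbf)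
  have hg2 : MemLp g (ENNReal.ofReal 2) μ :=
    MemLp.of_bound hg Cg (by simpa [Real.norm_eq_abs] using hbg)
  have h := integral_mul_norm_le_Lp_mul_Lq hpq hf2 hg2
  have h1 : |∫ x, f x * g x ∂μ| ≤ ∫ x, ‖f x‖ * ‖g x‖ ∂μ := by
    calc |∫ x, f x * g x ∂μ| ≤ ∫ x, ‖f x * g x‖ ∂μ := by
          simpa [Real.norm_eq_abs] using norm_integral_le_integral_norm (fun x => f x * g x)
      _ = ∫ x, ‖f x‖ * ‖g x‖ ∂μ := by simp [norm_mul]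
  have e1 : ∫ x, ‖f x‖ ^ (2:ℝ) ∂μ = ∫ x, (f x) ^ 2 ∂μ := by
    congr 1; funext x
    rw [show ((2:ℝ)) = ((2:ℕ):ℝ) by norm_num, Real.rpow_natCast, Real.norm_eq_abs, sq_abs]
  have e2 : ∫ x, ‖g x‖ ^ (2:ℝ) ∂μ = ∫ x, (g x) ^ 2 ∂μ := by
    congr 1; funext x
    rw [show ((2:ℝ)) = ((2:ℕ):ℝ) by norm_num, Real.rpow_natCast, Real.norm_eq_abs, sq_abs]
  rw [e1, e2] at h
  have hs1 : (∫ x, (f x) ^ 2 ∂μ) ^ ((1:ℝ)/2) = Real.sqrt (∫ x, (f x) ^ 2 ∂μ) :=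
    (Real.sqrt_eq_rpow _).symm
  have hs2 : (∫ x, (g x) ^ 2 ∂μ) ^ ((1:ℝ)/2) = Real.sqrt (∫ x, (g x) ^ 2 ∂μ) :=
    (Real.sqrt_eq_rpow _).symm
  rw [hs1, hs2] at h
  exact h1.trans h

lemma intO_nonneg {L : ℝ} {F : ℝ → ℝ → ℝ} (h : ∀ x y, 0 ≤ F x y) : 0 ≤ intO L F :=
  setIntegral_nonneg (omg_meas L) fun p _ => h p.1 p.2

lemma intO_mono {L : ℝ} (hL : L ≤ 1) {F G : ℝ → ℝ → ℝ}
    (hF : Continuous fun p : ℝ × ℝ => F p.1 p.2) (hG : Continuous fun p : ℝ × ℝ => G p.1 p.2)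
    (h : ∀ p ∈ Omg L, F p.1 p.2 ≤ G p.1 p.2) : intO L F ≤ intO L G :=
  setIntegral_mono_on (integrableOn_omg hL hF) (integrableOn_omg hL hG) (omg_meas L) h

lemma intO_add {L : ℝ} (hL : L ≤ 1) {F G : ℝ → ℝ → ℝ}
    (hF : Continuous fun p : ℝ × ℝ => F p.1 p.2) (hG : Continuous fun p : ℝ × ℝ => G p.1 p.2) :
    intO L (fun x y => F x y + G x y) = intO L F + intO L G :=
  integral_add (integrableOn_omg hL hF) (integrableOn_omg hL hG)

lemma intO_const_mul {L : ℝ} (c : ℝ) (F : ℝ → ℝ → ℝ) :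
    intO L (fun x y => c * F x y) = c * intO L F := integral_const_mul c _

lemma supO_spec {L : ℝ} (hL0 : 0 < L) (hL : L ≤ 1) {f : ℝ → ℝ → ℝ}
    (hf : Continuous fun p : ℝ × ℝ => f p.1 p.2) :
    0 ≤ supO L f ∧ ∀ p ∈ Omg L, |f p.1 p.2| ≤ supO L f := by
  obtain ⟨C, hC⟩ := compact_box.exists_bound_of_continuousOn hf.continuousOn
  have hbdd : BddAbove ((fun p : ℝ × ℝ => |f p.1 p.2|) '' Omg L) := by
    refine ⟨C, ?_⟩
    rintro r ⟨p, hp, rfl⟩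
    simpa [Real.norm_eq_abs] using hC p (omg_sub hL hp)
  have hne : ((L/2, 1) : ℝ × ℝ) ∈ Omg L := ⟨⟨by linarith, by linarith⟩, by norm_num, by norm_num⟩
  have hin : ∀ p ∈ Omg L, |f p.1 p.2| ≤ supO L f := fun p hp => le_csSup hbdd ⟨p, hp, rfl⟩
  exact ⟨(abs_nonneg _).trans (hin _ hne), hin⟩

lemma intO_cs {L : ℝ} (hL : L ≤ 1) {F G : ℝ → ℝ → ℝ}
    (hF : Continuous fun p : ℝ × ℝ => F p.1 p.2) (hG : Continuous fun p : ℝ × ℝ => G p.1 p.2) :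
    |intO L (fun x y => F x y * G x y)| ≤ l2 L F * l2 L G := by
  haveI := finite_omg hL
  obtain ⟨Cf, hCf⟩ := compact_box.exists_bound_of_continuousOn hF.continuousOn
  obtain ⟨Cg, hCg⟩ := compact_box.exists_bound_of_continuousOn hG.continuousOn
  have hbf : ∀ᵐ p ∂(volume.restrict (Omg L)), |F p.1 p.2| ≤ Cf :=
    (ae_restrict_mem (omg_meas L)).mono fun p hp => by
      simpa [Real.norm_eq_abs] using hCf p (omg_sub hL hp)
  have hbg : ∀ᵐ p ∂(volume.restrict (Omg L)), |G p.1 p.2| ≤ Cg :=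
    (ae_restrict_mem (omg_meas L)).mono fun p hp => by
      simpa [Real.norm_eq_abs] using hCg p (omg_sub hL hp)
  exact my_cs hF.aestronglyMeasurable.restrict hG.aestronglyMeasurable.restrict hbf hbg

lemma cont_slice_y {u : ℝ → ℝ → ℝ} (h : Continuous fun p : ℝ × ℝ => u p.1 p.2) (x : ℝ) :
    Continuous fun t => u x t := h.comp (continuous_const.prodMk continuous_id)

lemma poincare {L : ℝ} (hL : L ≤ 1) {u : ℝ → ℝ → ℝ} (hu : ContDiff ℝ (⊤ : ℕ∞) (uncurry u))
    (hbc : ∀ x ∈ Icc (0:ℝ) L, u x 0 = 0) :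
    intO L (fun x y => (u x y)^2) ≤ 4 * intO L (fun x y => (pdy u x y)^2) := by
  haveI hfin1 : IsFiniteMeasure (volume.restrict (Ioc (0:ℝ) 2)) := by
    constructor
    rw [Measure.restrict_apply_univ, Real.volume_Ioc]
    exact ENNReal.ofReal_lt_top
  -- pointwise bound
  have key : ∀ x ∈ Icc (0:ℝ) L, ∀ y ∈ Icc (0:ℝ) 2,
      (u x y)^2 ≤ 2 * ∫ t in Ioc (0:ℝ) 2, (pdy u x t)^2 := by
    intro x hx y hy
    have hgc : Continuous fun t => pdy u x t := cont_slice_y (cont_pdy hu) x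
    have hftc : u x y = ∫ t in (0:ℝ)..y, pdy u x t := by
      have hd : ∀ t ∈ uIcc (0:ℝ) y, HasDerivAt (fun t' => u x t') (pdy u x t) t := by
        intro t _
        have h := hasDeriv_y hu x t
        rwa [← pdy_eq hu x t] at h
      rw [intervalIntegral.integral_eq_sub_of_hasDerivAt hd (hgc.intervalIntegrable 0 y),
        hbc x hx, sub_zero]
    have hint2 : IntegrableOn (fun t => |pdy u x t|) (Ioc (0:ℝ) 2) :=
      (hgc.abs.continuousOn.integrableOn_compact isCompact_Icc).mono_set Ioc_subset_Icc_self
    have habs1 : |u x y| ≤ ∫ t in Ioc (0:ℝ) y, |pdy u x t| := by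
      rw [hftc, intervalIntegral.integral_of_le hy.1]
      simpa [Real.norm_eq_abs] using
        norm_integral_le_integral_norm (μ := volume.restrict (Ioc (0:ℝ) y)) (fun t => pdy u x t)
    have habs2 : (∫ t in Ioc (0:ℝ) y, |pdy u x t|) ≤ ∫ t in Ioc (0:ℝ) 2, |pdy u x t| := by
      apply setIntegral_mono_set hint2
      · exact ae_of_all _ fun t => abs_nonneg _
      · exact (Ioc_subset_Ioc_right hy.2).eventuallyLE
    obtain ⟨Cg, hCg⟩ := isCompact_Icc.exists_bound_of_continuousOn
      (hgc.continuousOn (s := Icc (0:ℝ) 2))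
    have hbg : ∀ᵐ t ∂(volume.restrict (Ioc (0:ℝ) 2)), |(fun t => |pdy u x t|) t| ≤ Cg :=
      (ae_restrict_mem measurableSet_Ioc).mono fun t ht => by
        simp only [abs_abs]
        simpa [Real.norm_eq_abs] using hCg t (Ioc_subset_Icc_self ht)
    have hcs := my_cs (μ := volume.restrict (Ioc (0:ℝ) 2))
      (f := fun _ => (1:ℝ)) (g := fun t => |pdy u x t|)
      aestronglyMeasurable_const hgc.abs.aestronglyMeasurable.restrict
      (Cf := 1) (ae_of_all _ fun _ => by norm_num) hbg
    have e1 : (∫ _t in Ioc (0:ℝ) 2, ((1:ℝ))^2) = 2 := by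
      simp [Real.volume_Ioc]
    have e2 : (∫ t in Ioc (0:ℝ) 2, (|pdy u x t|)^2) = ∫ t in Ioc (0:ℝ) 2, (pdy u x t)^2 := by
      simp [sq_abs]
    rw [e1, e2] at hcs
    simp only [one_mul] at hcs
    have hI0 : 0 ≤ ∫ t in Ioc (0:ℝ) 2, (pdy u x t)^2 :=
      setIntegral_nonneg measurableSet_Ioc fun t _ => sq_nonneg _
    have habs3 : |u x y| ≤ Real.sqrt 2 * Real.sqrt (∫ t in Ioc (0:ℝ) 2, (pdy u x t)^2) :=
      habs1.trans (habs2.trans ((le_abs_self _).trans hcs))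
    calc (u x y)^2 = |u x y|^2 := (sq_abs _).symm
      _ ≤ (Real.sqrt 2 * Real.sqrt (∫ t in Ioc (0:ℝ) 2, (pdy u x t)^2))^2 := by
          apply pow_le_pow_left₀ (abs_nonneg _) habs3
      _ = 2 * ∫ t in Ioc (0:ℝ) 2, (pdy u x t)^2 := by
          rw [mul_pow, Real.sq_sqrt (by norm_num : (0:ℝ) ≤ 2), Real.sq_sqrt hI0]
  -- slice inequality
  have hslice : ∀ x ∈ Ioo (0:ℝ) L,
      (∫ y in Ioo (0:ℝ) 2, (u x y)^2) ≤ 4 * ∫ y in Ioo (0:ℝ) 2, (pdy u x y)^2 := by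
    intro x hx
    have hIeq : (∫ t in Ioc (0:ℝ) 2, (pdy u x t)^2) = ∫ t in Ioo (0:ℝ) 2, (pdy u x t)^2 :=
      integral_Ioc_eq_integral_Ioo
    have hI0 : 0 ≤ ∫ t in Ioc (0:ℝ) 2, (pdy u x t)^2 :=
      setIntegral_nonneg measurableSet_Ioc fun t _ => sq_nonneg _
    have h1 : (∫ y in Ioo (0:ℝ) 2, (u x y)^2)
        ≤ ∫ _y in Ioo (0:ℝ) 2, (2 * ∫ t in Ioc (0:ℝ) 2, (pdy u x t)^2) := by
      apply setIntegral_mono_on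
      · exact (((cont_slice_y (cont_u hu) x).pow 2).continuousOn.integrableOn_compact
          isCompact_Icc).mono_set Ioo_subset_Icc_self
      · exact integrableOn_const (by rw [Real.volume_Ioo]; exact ENNReal.ofReal_ne_top)
      · exact measurableSet_Ioo
      · exact fun y hy => key x ⟨hx.1.le, hx.2.le⟩ y (Ioo_subset_Icc_self hy)
    have h2 : (∫ _y in Ioo (0:ℝ) 2, (2 * ∫ t in Ioc (0:ℝ) 2, (pdy u x t)^2))
        = 4 * ∫ t in Ioo (0:ℝ) 2, (pdy u x t)^2 := by
      rw [setIntegral_const, ← hIeq, measureReal_def, Real.volume_Ioo]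
      rw [show ((2:ℝ) - 0) = 2 by norm_num, ENNReal.toReal_ofReal (by norm_num : (0:ℝ) ≤ 2)]
      simp [smul_eq_mul]; ring
    rw [h2] at h1
    exact h1
  -- Fubini
  have fub : ∀ f : ℝ × ℝ → ℝ, IntegrableOn f (Omg L) →
      (∫ p in Omg L, f p) = ∫ x in Ioo (0:ℝ) L, ∫ y in Ioo (0:ℝ) 2, f (x, y) := by
    intro f hf
    rw [Omg, show (volume : Measure (ℝ × ℝ)) = (volume : Measure ℝ).prod volume from
      Measure.volume_eq_prod ℝ ℝ]
    exact setIntegral_prod f (by rwa [← Measure.volume_eq_prod, ← Omg])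
  have hiu : IntegrableOn (fun p : ℝ × ℝ => (u p.1 p.2)^2) (Omg L) :=
    integrableOn_omg hL ((cont_u hu).pow 2)
  have hig : IntegrableOn (fun p : ℝ × ℝ => (pdy u p.1 p.2)^2) (Omg L) :=
    integrableOn_omg hL ((cont_pdy hu).pow 2)
  have hprod : ∀ f : ℝ × ℝ → ℝ, IntegrableOn f (Omg L) →
      Integrable f ((volume.restrict (Ioo (0:ℝ) L)).prod (volume.restrict (Ioo (0:ℝ) 2))) := by
    intro f hf
    rw [Measure.prod_restrict, ← Measure.volume_eq_prod]
    exact hf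
  have hxu := (hprod _ hiu).integral_prod_left
  have hxg := (hprod _ hig).integral_prod_left
  have hmain : (∫ x in Ioo (0:ℝ) L, ∫ y in Ioo (0:ℝ) 2, (u x y)^2)
      ≤ ∫ x in Ioo (0:ℝ) L, 4 * ∫ y in Ioo (0:ℝ) 2, (pdy u x y)^2 := by
    apply setIntegral_mono_on hxu (hxg.const_mul 4) measurableSet_Ioo
    exact fun x hx => hslice x hx
  rw [intO, intO, fub _ hiu, fub _ hig]
  calc (∫ x in Ioo (0:ℝ) L, ∫ y in Ioo (0:ℝ) 2, (u x y)^2)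
      ≤ ∫ x in Ioo (0:ℝ) L, 4 * ∫ y in Ioo (0:ℝ) 2, (pdy u x y)^2 := hmain
    _ = 4 * ∫ x in Ioo (0:ℝ) L, ∫ y in Ioo (0:ℝ) 2, (pdy u x y)^2 := integral_const_mul 4 _


set_option maxHeartbeats 2000000 in
/-- the nonlinear estimates. -/
theorem stmt6 :
    ∃ C : ℝ, 0 < C ∧ ∃ γ₀ : ℝ, 0 < γ₀ ∧
    ∀ γ ε L : ℝ, 0 < γ → γ ≤ γ₀ → 0 < ε → ε < 1 → 0 < L → L ≤ 1 →
    ∀ u v : ℝ → ℝ → ℝ,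
      ContDiff ℝ (⊤ : ℕ∞) (uncurry u) → ContDiff ℝ (⊤ : ℕ∞) (uncurry v) →
      (∀ y ∈ Icc (0:ℝ) 2, u 0 y = 0 ∧ v 0 y = 0) →
      (∀ x ∈ Icc (0:ℝ) L, u x 0 = 0 ∧ v x 0 = 0 ∧ u x 2 = 0 ∧ v x 2 = 0) →
      |intO L (fun x y => N1 ε γ u v x y * (u x y + pdx u x y))|
          + |intO L (fun x y => N2 ε γ u v x y * (v x y + pdx v x y))|
          + ε ^ (γ/4) * (l2 L (N1 ε γ u v) + l2 L (N2 ε γ u v))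
        ≤ C * ε ^ (γ/2) * ((normX ε γ L u v)^3 + (normX ε γ L u v)^2) := by
  refine ⟨16, by norm_num, 1, one_pos, ?_⟩
  intro γ ε L hγ hγ1 hε hε1 hL0 hL1 u v hu hv hbc0 hbcy
  have hcu := cont_u hu
  have hcv := cont_u hv
  have hcux := cont_pdx hu
  have hcuy := cont_pdy hu
  have hcvx := cont_pdx hv
  have hcvy := cont_pdy hv
  set s := Real.sqrt ε with hs
  set t := ε ^ (γ/2) with ht
  have hs0 : 0 < s := Real.sqrt_pos.2 hε
  have hs1 : s ≤ 1 := by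
    rw [hs, show (1:ℝ) = Real.sqrt 1 by simp]
    exact Real.sqrt_le_sqrt hε1.le
  have hssq : s^2 = ε := Real.sq_sqrt hε.le
  have ht0 : 0 < t := Real.rpow_pos_of_pos hε _
  set A := normX ε γ L u v with hA
  -- sup bounds
  have hsupu := supO_spec hL0 hL1 (f := fun x y => Real.sqrt ε * u x y) (continuous_const.mul hcu)
  have hsupv := supO_spec hL0 hL1 (f := fun x y => Real.sqrt ε * v x y) (continuous_const.mul hcv)
  have hE0u : 0 ≤ Real.sqrt (intO L fun x y => ε * gradSq u x y) := Real.sqrt_nonneg _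
  have hE0v : 0 ≤ Real.sqrt (intO L fun x y => ε * gradSq v x y) := Real.sqrt_nonneg _
  have hA0 : 0 ≤ A := by
    rw [hA, normX, normE]
    have := hsupu.1; have := hsupv.1
    have : 0 ≤ t * (supO L (fun x y => Real.sqrt ε * u x y) + supO L (fun x y => Real.sqrt ε * v x y)) :=
      mul_nonneg ht0.le (by linarith [hsupu.1, hsupv.1])
    rw [← ht]
    linarith
  -- pointwise sup bounds with B
  set B := A / (s * t) with hB
  have hst0 : 0 < s * t := mul_pos hs0 ht0
  have hB0 : 0 ≤ B := div_nonneg hA0 hst0.le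
  have hBst : B * (s * t) = A := div_mul_cancel₀ _ hst0.ne'
  have hbu : ∀ p ∈ Omg L, |u p.1 p.2| ≤ B := by
    intro p hp
    have h1 : |Real.sqrt ε * u p.1 p.2| ≤ supO L (fun x y => Real.sqrt ε * u x y) := hsupu.2 p hp
    rw [abs_mul, abs_of_nonneg (Real.sqrt_nonneg ε), ← hs] at h1
    have h2 : t * supO L (fun x y => Real.sqrt ε * u x y) ≤ A := by
      rw [hA, normX, ← ht, normE, mul_add]
      linarith [hE0u, hE0v, mul_nonneg ht0.le hsupv.1]
    have h3 : s * t * |u p.1 p.2| ≤ A :=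
      calc s * t * |u p.1 p.2| = t * (s * |u p.1 p.2|) := by ring
        _ ≤ t * supO L (fun x y => Real.sqrt ε * u x y) := by
            exact mul_le_mul_of_nonneg_left h1 ht0.le
        _ ≤ A := h2
    rw [hB, le_div_iff₀ hst0, mul_comm]
    exact h3
  have hbv : ∀ p ∈ Omg L, |v p.1 p.2| ≤ B := by
    intro p hp
    have h1 : |Real.sqrt ε * v p.1 p.2| ≤ supO L (fun x y => Real.sqrt ε * v x y) := hsupv.2 p hp
    rw [abs_mul, abs_of_nonneg (Real.sqrt_nonneg ε), ← hs] at h1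
    have h2 : t * supO L (fun x y => Real.sqrt ε * v x y) ≤ A := by
      rw [hA, normX, ← ht, normE, mul_add]
      linarith [hE0u, hE0v, mul_nonneg ht0.le hsupu.1]
    have h3 : s * t * |v p.1 p.2| ≤ A :=
      calc s * t * |v p.1 p.2| = t * (s * |v p.1 p.2|) := by ring
        _ ≤ t * supO L (fun x y => Real.sqrt ε * v x y) := by
            exact mul_le_mul_of_nonneg_left h1 ht0.le
        _ ≤ A := h2
    rw [hB, le_div_iff₀ hst0, mul_comm]
    exact h3
  -- gradient bounds
  have gradb : ∀ w : ℝ → ℝ → ℝ, ContDiff ℝ (⊤ : ℕ∞) (uncurry w) →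
      Real.sqrt (intO L fun x y => ε * gradSq w x y) ≤ A →
      intO L (fun x y => (pdx w x y)^2) ≤ A^2/ε ∧ intO L (fun x y => (pdy w x y)^2) ≤ A^2/ε := by
    intro w hw hle
    have hIx0 : 0 ≤ intO L (fun x y => (pdx w x y)^2) := intO_nonneg fun x y => sq_nonneg _
    have hIy0 : 0 ≤ intO L (fun x y => (pdy w x y)^2) := intO_nonneg fun x y => sq_nonneg _
    have hEeq : (intO L fun x y => ε * gradSq w x y)
        = ε * (intO L (fun x y => (pdx w x y)^2) + intO L (fun x y => (pdy w x y)^2)) := by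
      simp only [gradSq]
      rw [intO_const_mul ε (fun x y => (pdx w x y)^2 + (pdy w x y)^2),
        intO_add hL1 ((cont_pdx hw).pow 2) ((cont_pdy hw).pow 2)]
    have hE0 : 0 ≤ intO L fun x y => ε * gradSq w x y := by
      rw [hEeq]; positivity
    have hEA : (intO L fun x y => ε * gradSq w x y) ≤ A^2 :=
      calc (intO L fun x y => ε * gradSq w x y)
          = (Real.sqrt (intO L fun x y => ε * gradSq w x y))^2 := (Real.sq_sqrt hE0).symm
        _ ≤ A^2 := pow_le_pow_left₀ (Real.sqrt_nonneg _) hle 2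
    rw [hEeq, mul_add] at hEA
    constructor
    · rw [le_div_iff₀ hε, mul_comm]; linarith [mul_nonneg hε.le hIy0]
    · rw [le_div_iff₀ hε, mul_comm]; linarith [mul_nonneg hε.le hIx0]
  have hEuA : Real.sqrt (intO L fun x y => ε * gradSq u x y) ≤ A := by
    rw [hA, normX, normE]
    have : 0 ≤ t * (supO L (fun x y => Real.sqrt ε * u x y) + supO L (fun x y => Real.sqrt ε * v x y)) :=
      mul_nonneg ht0.le (by linarith [hsupu.1, hsupv.1])
    rw [← ht]
    linarith
  have hEvA : Real.sqrt (intO L fun x y => ε * gradSq v x y) ≤ A := by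
    rw [hA, normX, normE]
    have : 0 ≤ t * (supO L (fun x y => Real.sqrt ε * u x y) + supO L (fun x y => Real.sqrt ε * v x y)) :=
      mul_nonneg ht0.le (by linarith [hsupu.1, hsupv.1])
    rw [← ht]
    linarith
  obtain ⟨hIxu, hIyu⟩ := gradb u hu hEuA
  obtain ⟨hIxv, hIyv⟩ := gradb v hv hEvA
  clear hsupu hsupv hE0u hE0v gradb hEuA hEvA
  have hBeq : B = A / (s * t) := hB
  clear hA hB
  clear_value s t A B
  have hAe0 : 0 ≤ A^2/ε := div_nonneg (sq_nonneg A) hε.le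
  -- Poincaré
  have hPu : intO L (fun x y => (u x y)^2) ≤ 4 * intO L (fun x y => (pdy u x y)^2) :=
    poincare hL1 hu fun x hx => (hbcy x hx).1
  have hPv : intO L (fun x y => (v x y)^2) ≤ 4 * intO L (fun x y => (pdy v x y)^2) :=
    poincare hL1 hv fun x hx => (hbcy x hx).2.1
  have hs' : s ≠ 0 := hs0.ne'
  have ht' : t ≠ 0 := ht0.ne'
  -- main N-bound
  have keyN : ∀ dxw dyw : ℝ → ℝ → ℝ, (Continuous fun p : ℝ × ℝ => dxw p.1 p.2) →
      (Continuous fun p : ℝ × ℝ => dyw p.1 p.2) →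
      intO L (fun x y => (dxw x y)^2) ≤ A^2/ε → intO L (fun x y => (dyw x y)^2) ≤ A^2/ε →
      intO L (fun x y => (-(ε ^ ((3:ℝ)/2 + γ)) * (u x y * dxw x y + v x y * dyw x y))^2)
        ≤ 4 * ε * t^2 * A^4 := by
    intro dxw dyw hcx hcy hIx hIy
    set c := ε ^ ((3:ℝ)/2 + γ) with hc
    have hc0 : 0 < c := Real.rpow_pos_of_pos hε _
    set KK := 2 * c^2 * B^2 with hKK
    have hKK0 : 0 ≤ KK := by positivity
    have hmono : intO L (fun x y => (-(c) * (u x y * dxw x y + v x y * dyw x y))^2)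
        ≤ intO L (fun x y => KK * ((dxw x y)^2 + (dyw x y)^2)) := by
      apply intO_mono hL1
      · exact (continuous_const.mul ((hcu.mul hcx).add (hcv.mul hcy))).pow 2
      · exact continuous_const.mul ((hcx.pow 2).add (hcy.pow 2))
      · rintro p hp
        have h1 := hbu p hp
        have h2 := hbv p hp
        have ha2 : (u p.1 p.2)^2 ≤ B^2 := by
          nlinarith [abs_nonneg (u p.1 p.2), sq_abs (u p.1 p.2)]
        have hb2 : (v p.1 p.2)^2 ≤ B^2 := by
          nlinarith [abs_nonneg (v p.1 p.2), sq_abs (v p.1 p.2)]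
        have hS : (u p.1 p.2 * dxw p.1 p.2 + v p.1 p.2 * dyw p.1 p.2)^2
            ≤ 2 * B^2 * ((dxw p.1 p.2)^2 + (dyw p.1 p.2)^2) := by
          nlinarith [sq_nonneg (u p.1 p.2 * dxw p.1 p.2 - v p.1 p.2 * dyw p.1 p.2),
            mul_nonneg (sub_nonneg.2 ha2) (sq_nonneg (dxw p.1 p.2)),
            mul_nonneg (sub_nonneg.2 hb2) (sq_nonneg (dyw p.1 p.2))]
        calc (-(c) * (u p.1 p.2 * dxw p.1 p.2 + v p.1 p.2 * dyw p.1 p.2))^2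
            = c^2 * (u p.1 p.2 * dxw p.1 p.2 + v p.1 p.2 * dyw p.1 p.2)^2 := by ring
          _ ≤ c^2 * (2 * B^2 * ((dxw p.1 p.2)^2 + (dyw p.1 p.2)^2)) :=
              mul_le_mul_of_nonneg_left hS (sq_nonneg c)
          _ = KK * ((dxw p.1 p.2)^2 + (dyw p.1 p.2)^2) := by rw [hKK]; ring
    rw [intO_const_mul KK _, intO_add hL1 (hcx.pow 2) (hcy.pow 2)] at hmono
    have hsum2 : intO L (fun x y => (dxw x y)^2) + intO L (fun x y => (dyw x y)^2)
        ≤ 2*(A^2/ε) := by linarith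
    have hfin : intO L (fun x y => (-(c) * (u x y * dxw x y + v x y * dyw x y))^2)
        ≤ KK * (2*(A^2/ε)) := hmono.trans (mul_le_mul_of_nonneg_left hsum2 hKK0)
    refine hfin.trans (le_of_eq ?_)
    have hc2 : c^2 = ε^(3:ℕ) * t^4 := by
      rw [hc, ht]
      rw [← Real.rpow_natCast (ε ^ ((3:ℝ)/2 + γ)) 2, ← Real.rpow_natCast (ε ^ (γ/2)) 4,
          ← Real.rpow_mul hε.le, ← Real.rpow_mul hε.le, ← Real.rpow_natCast ε 3,
          ← Real.rpow_add hε]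
      congr 1
      push_cast
      ring
    rw [hKK, hc2, hBeq, ← hssq]
    field_simp
    ring
  have hIN1 : intO L (fun x y => (N1 ε γ u v x y)^2) ≤ 4*ε*t^2*A^4 := by
    have h := keyN (pdx u) (pdy u) hcux hcuy hIxu hIyu
    simpa only [N1] using h
  have hIN2 : intO L (fun x y => (N2 ε γ u v x y)^2) ≤ 4*ε*t^2*A^4 := by
    have h := keyN (pdx v) (pdy v) hcvx hcvy hIxv hIyv
    simpa only [N2] using h
  have hl2N1 : l2 L (N1 ε γ u v) ≤ 2*s*t*A^2 := by
    rw [l2]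
    have h4 : 4*ε*t^2*A^4 = (2*s*t*A^2)^2 := by rw [← hssq]; ring
    have h5 := Real.sqrt_le_sqrt (hIN1.trans_eq h4)
    rwa [Real.sqrt_sq (by positivity)] at h5
  have hl2N2 : l2 L (N2 ε γ u v) ≤ 2*s*t*A^2 := by
    rw [l2]
    have h4 : 4*ε*t^2*A^4 = (2*s*t*A^2)^2 := by rw [← hssq]; ring
    have h5 := Real.sqrt_le_sqrt (hIN2.trans_eq h4)
    rwa [Real.sqrt_sq (by positivity)] at h5
  -- L2 of (w + pdx w)
  have hl2sum : ∀ w : ℝ → ℝ → ℝ, (Continuous fun p : ℝ × ℝ => w p.1 p.2) →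
      (Continuous fun p : ℝ × ℝ => pdx w p.1 p.2) →
      intO L (fun x y => (w x y)^2) ≤ 4 * intO L (fun x y => (pdy w x y)^2) →
      intO L (fun x y => (pdx w x y)^2) ≤ A^2/ε →
      intO L (fun x y => (pdy w x y)^2) ≤ A^2/ε →
      l2 L (fun x y => w x y + pdx w x y) ≤ 4*A/s := by
    intro w hcw hcwx hPw hIxw hIyw
    have hmono : intO L (fun x y => (w x y + pdx w x y)^2)
        ≤ intO L (fun x y => 2*(w x y)^2 + 2*(pdx w x y)^2) := by
      apply intO_mono hL1 ((hcw.add hcwx).pow 2)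
        ((continuous_const.mul (hcw.pow 2)).add (continuous_const.mul (hcwx.pow 2)))
      intro p hp
      nlinarith [sq_nonneg (w p.1 p.2 - pdx w p.1 p.2)]
    rw [intO_add hL1 (continuous_const.mul (hcw.pow 2)) (continuous_const.mul (hcwx.pow 2)),
      intO_const_mul 2 _, intO_const_mul 2 _] at hmono
    have hIw : intO L (fun x y => (w x y)^2) ≤ 4*(A^2/ε) := hPw.trans (by linarith)
    have hfin : intO L (fun x y => (w x y + pdx w x y)^2) ≤ 16*A^2/ε := by
      have : 2 * (4*(A^2/ε)) + 2 * (A^2/ε) ≤ 16*A^2/ε := by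
        rw [mul_div_assoc]
        linarith
      linarith
    rw [l2]
    have h4 : 16*A^2/ε = (4*A/s)^2 := by rw [← hssq]; field_simp; ring
    have h5 := Real.sqrt_le_sqrt (hfin.trans_eq h4)
    rwa [Real.sqrt_sq (by positivity)] at h5
  have hl2u := hl2sum u hcu hcux hPu hIxu hIyu
  have hl2v := hl2sum v hcv hcvx hPv hIxv hIyv
  -- Cauchy–Schwarz terms
  have hNc1 : Continuous fun p : ℝ × ℝ => N1 ε γ u v p.1 p.2 := by
    simp only [N1]
    exact continuous_const.mul ((hcu.mul hcux).add (hcv.mul hcuy))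
  have hNc2 : Continuous fun p : ℝ × ℝ => N2 ε γ u v p.1 p.2 := by
    simp only [N2]
    exact continuous_const.mul ((hcu.mul hcvx).add (hcv.mul hcvy))
  have hCS1 : |intO L (fun x y => N1 ε γ u v x y * (u x y + pdx u x y))| ≤ 8*t*A^3 := by
    have h := intO_cs hL1 (F := N1 ε γ u v) (G := fun x y => u x y + pdx u x y) hNc1 (hcu.add hcux)
    have h2 : l2 L (N1 ε γ u v) * l2 L (fun x y => u x y + pdx u x y)
        ≤ (2*s*t*A^2) * (4*A/s) :=
      mul_le_mul hl2N1 hl2u (Real.sqrt_nonneg _) (by positivity)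
    have h3 : (2*s*t*A^2) * (4*A/s) = 8*t*A^3 := by field_simp; ring
    linarith [h.trans h2]
  have hCS2 : |intO L (fun x y => N2 ε γ u v x y * (v x y + pdx v x y))| ≤ 8*t*A^3 := by
    have h := intO_cs hL1 (F := N2 ε γ u v) (G := fun x y => v x y + pdx v x y) hNc2 (hcv.add hcvx)
    have h2 : l2 L (N2 ε γ u v) * l2 L (fun x y => v x y + pdx v x y)
        ≤ (2*s*t*A^2) * (4*A/s) :=
      mul_le_mul hl2N2 hl2v (Real.sqrt_nonneg _) (by positivity)
    have h3 : (2*s*t*A^2) * (4*A/s) = 8*t*A^3 := by field_simp; ring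
    linarith [h.trans h2]
  -- third term
  have hq1 : ε ^ (γ/4) ≤ 1 := Real.rpow_le_one hε.le hε1.le (by positivity)
  have hq0 : 0 ≤ ε ^ (γ/4) := (Real.rpow_pos_of_pos hε _).le
  have hl2N1_0 : 0 ≤ l2 L (N1 ε γ u v) := Real.sqrt_nonneg _
  have hl2N2_0 : 0 ≤ l2 L (N2 ε γ u v) := Real.sqrt_nonneg _
  have hterm3 : ε ^ (γ/4) * (l2 L (N1 ε γ u v) + l2 L (N2 ε γ u v)) ≤ 4*t*A^2 := by
    have hsum : l2 L (N1 ε γ u v) + l2 L (N2 ε γ u v) ≤ 4*s*t*A^2 := by linarith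
    have h1 : ε ^ (γ/4) * (l2 L (N1 ε γ u v) + l2 L (N2 ε γ u v)) ≤ 1 * (4*s*t*A^2) :=
      mul_le_mul hq1 hsum (by linarith) one_pos.le
    have h2 : (4:ℝ)*s*t*A^2 ≤ 4*t*A^2 := by
      nlinarith [mul_nonneg ht0.le (sq_nonneg A)]
    linarith
  -- final assembly
  have hfinal : |intO L (fun x y => N1 ε γ u v x y * (u x y + pdx u x y))|
      + |intO L (fun x y => N2 ε γ u v x y * (v x y + pdx v x y))|
      + ε ^ (γ/4) * (l2 L (N1 ε γ u v) + l2 L (N2 ε γ u v))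
      ≤ 16 * t * (A^3 + A^2) := by
    nlinarith [mul_nonneg ht0.le (sq_nonneg A), mul_nonneg ht0.le (pow_nonneg hA0 3)]
  exact hfinal
end
end

section
/- Let N₀ ≥ 104 be an integer and let μ̃ ∈ C^∞([0,2]) satisfy ∂_y^k μ̃(0) = ∂_y^k μ̃(2) = 0 for all 0 ≤ k ≤ N₀. Then there exist α₀ > 0 and C = C(μ̃) such that for every 0 < α ≤ α₀ the function μ(y) := y + α μ̃(y) satisfies μ(0) = 0, μ(2) = 2, μ > 0 on (0,2], μ'(0) > 0, |μ'(2)| > 0, and ‖μ'''/μ‖_{W^{100,∞}([0,2])} ≤ C α. -/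
open MeasureTheory Set Real Function

noncomputable section

open scoped ContDiff in
private lemma my_iter_sub (f g : ℝ → ℝ) (hf : ContDiff ℝ ∞ f) (hg : ContDiff ℝ ∞ g) (n : ℕ)
    (x : ℝ) : deriv^[n] (fun y => f y - g y) x = deriv^[n] f x - deriv^[n] g x := by
  have h := iteratedDerivWithin_sub (Set.mem_univ x) uniqueDiffOn_univ
    (hf.of_le (by exact_mod_cast le_top : ((n:ℕ∞) : WithTop ℕ∞) ≤ ∞)).contDiffWithinAt
    (hg.of_le (by exact_mod_cast le_top : ((n:ℕ∞) : WithTop ℕ∞) ≤ ∞)).contDiffWithinAt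
  simpa [iteratedDerivWithin_univ, iteratedDeriv_eq_iterate, Pi.sub_def] using h

open scoped ContDiff in
private lemma my_iter_const_mul (f : ℝ → ℝ) (hf : ContDiff ℝ ∞ f) (c : ℝ) (n : ℕ) (x : ℝ) :
    deriv^[n] (fun y => c * f y) x = c * deriv^[n] f x := by
  have h := iteratedDerivWithin_const_mul (Set.mem_univ x) uniqueDiffOn_univ c
    (hf.of_le (by exact_mod_cast le_top : ((n:ℕ∞) : WithTop ℕ∞) ≤ ∞)).contDiffWithinAt
  rw [iteratedDerivWithin_univ, iteratedDerivWithin_univ, iteratedDeriv_eq_iterate,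
    iteratedDeriv_eq_iterate] at h
  exact h

open scoped ContDiff in
private lemma my_taylor_bound : ∀ (m : ℕ) (f : ℝ → ℝ), ContDiff ℝ ∞ f →
    (∀ r < m, deriv^[r] f 0 = 0) →
    ∀ M : ℝ, 0 ≤ M → (∀ y ∈ Icc (0:ℝ) 2, |deriv^[m] f y| ≤ M) →
    ∀ y ∈ Icc (0:ℝ) 2, |f y| ≤ M * y ^ m := by
  intro m
  induction m with
  | zero => intro f _ _ M _ hM y hy; simpa using hM y hy
  | succ m ih =>
    intro f hf h0 M hM hbd y hy
    have hdf : ContDiff ℝ ∞ (deriv f) := (contDiff_infty_iff_deriv.mp hf).2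
    have hder : ∀ y ∈ Icc (0:ℝ) 2, |deriv f y| ≤ M * y ^ m := by
      refine ih (deriv f) hdf (fun r hr => ?_) M hM (fun z hz => ?_)
      · have := h0 (r+1) (by omega)
        rwa [Function.iterate_succ_apply] at this
      · have := hbd z hz
        rwa [Function.iterate_succ_apply] at this
    have hfd : Differentiable ℝ f := (contDiff_infty_iff_deriv.mp hf).1
    have key : ∀ s : ℝ, s = 1 ∨ s = -1 → (fun y => M * y ^ (m+1) - s * f y) 0 ≤
        (fun y => M * y ^ (m+1) - s * f y) y := by
      intro s hs
      have hmono : MonotoneOn (fun y => M * y ^ (m+1) - s * f y) (Icc (0:ℝ) 2) := by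
        apply monotoneOn_of_deriv_nonneg (convex_Icc 0 2)
        · exact ((continuous_const.mul (continuous_pow (m+1))).sub
            (continuous_const.mul hfd.continuous)).continuousOn
        · intro z hz
          exact (((differentiable_pow (m+1)).const_mul M).sub
            ((hfd.const_mul s))).differentiableAt.differentiableWithinAt
        · intro z hz
          rw [interior_Icc] at hz
          have hd : deriv (fun y => M * y ^ (m+1) - s * f y) z
              = M * ((m+1) * z ^ m) - s * deriv f z := by
            rw [deriv_fun_sub (((differentiable_pow (m+1)).const_mul M) z)
              ((hfd.const_mul s) z), deriv_const_mul _ ((differentiable_pow (m+1)) z),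
              deriv_pow_field, deriv_const_mul _ (hfd z)]
            norm_num
          rw [hd]
          have hz0 : (0:ℝ) ≤ z := le_of_lt hz.1
          have h1 : |deriv f z| ≤ M * z ^ m := hder z ⟨hz0, le_of_lt hz.2⟩
          have h2 : s * deriv f z ≤ M * z ^ m := by
            rcases hs with rfl | rfl
            · nlinarith [abs_le.mp h1]
            · nlinarith [abs_le.mp h1]
          nlinarith [pow_nonneg hz0 m, mul_nonneg hM (pow_nonneg hz0 m)]
      exact hmono (by constructor <;> norm_num) hy hy.1
    have k1 := key 1 (Or.inl rfl)
    have k2 := key (-1) (Or.inr rfl)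
    have hf0 : f 0 = 0 := h0 0 (by omega)
    simp only [hf0, mul_zero, sub_zero, zero_pow (Nat.succ_ne_zero m), one_mul, neg_mul,
      neg_zero, sub_neg_eq_add] at k1 k2
    rw [abs_le]
    constructor <;> linarith

open scoped ContDiff in
private lemma my_leibniz_abs_le (F G : ℝ → ℝ) (hF : ContDiff ℝ ∞ F) (hG : ContDiff ℝ ∞ G) (i : ℕ)
    (y c : ℝ) (hb : ∀ k ≤ i, |deriv^[k] F y| * |deriv^[i-k] G y| ≤ c) :
    |deriv^[i] (fun z => F z * G z) y| ≤ 2^i * c := by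
  have h0 : |deriv^[i] (fun z => F z * G z) y| ≤ ∑ k ∈ Finset.range (i+1),
      (i.choose k : ℝ) * |deriv^[k] F y| * |deriv^[i-k] G y| := by
    have h := norm_iteratedFDeriv_mul_le (𝕜 := ℝ) hF hG y (n := i) (by exact_mod_cast le_top)
    simpa [norm_iteratedFDeriv_eq_norm_iteratedDeriv, iteratedDeriv_eq_iterate,
      Real.norm_eq_abs] using h
  refine h0.trans ?_
  have h1 : ∑ k ∈ Finset.range (i+1), (i.choose k : ℝ) * |deriv^[k] F y| * |deriv^[i-k] G y|
      ≤ ∑ k ∈ Finset.range (i+1), (i.choose k : ℝ) * c := by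
    refine Finset.sum_le_sum (fun k hk => ?_)
    rw [mul_assoc]
    exact mul_le_mul_of_nonneg_left
      (hb k (by simpa [Nat.lt_succ_iff] using Finset.mem_range.mp hk)) (by positivity)
  refine h1.trans (le_of_eq ?_)
  rw [← Finset.sum_mul, ← Nat.cast_sum, Nat.sum_range_choose]
  push_cast; ring

private lemma my_pow_le_big (a b : ℕ) (hab : a ≤ b) (hb : b - a ≤ 101) (y : ℝ)
    (hy : y ∈ Icc (0:ℝ) 2) : y^b ≤ 2^101 * y^a := by
  have h1 : y^b = y^(b-a) * y^a := by rw [← pow_add]; congr 1; omega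
  rw [h1]
  have h2 : y^(b-a) ≤ 2^(b-a) := pow_le_pow_left₀ hy.1 hy.2 _
  have h3 : (2:ℝ)^(b-a) ≤ 2^101 := pow_le_pow_right₀ (by norm_num) hb
  exact mul_le_mul_of_nonneg_right (h2.trans h3) (pow_nonneg hy.1 a)

/-- Numerator functions in the quotient-rule recursion for `deriv^[j] (α μ̃''' / μ)`. -/
private def Bb (α : ℝ) (f : ℝ → ℝ) : ℕ → ℝ → ℝ
  | 0 => fun y => α * deriv^[3] f y
  | (j+1) => fun y => deriv (Bb α f j) y * (y + α * f y)
      - ((j:ℝ)+1) * Bb α f j y * (1 + α * deriv f y)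

open scoped ContDiff in
private lemma Bb_contDiff (α : ℝ) (f : ℝ → ℝ) (hf : ContDiff ℝ ∞ f) :
    ∀ j, ContDiff ℝ ∞ (Bb α f j) := by
  intro j
  induction j with
  | zero => exact contDiff_const.mul (hf.iterate_deriv 3)
  | succ j ih =>
    have hd : ContDiff ℝ ∞ (deriv (Bb α f j)) := (contDiff_infty_iff_deriv.mp ih).2
    have hdf : ContDiff ℝ ∞ (deriv f) := (contDiff_infty_iff_deriv.mp hf).2
    exact (hd.mul (contDiff_id.add (contDiff_const.mul hf))).sub
      ((contDiff_const.mul ih).mul (contDiff_const.add (contDiff_const.mul hdf)))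

open scoped ContDiff in
private lemma Bb_rep (α : ℝ) (f : ℝ → ℝ) (hf : ContDiff ℝ ∞ f)
    (hne : ∀ y ∈ Ioo (0:ℝ) 2, y + α * f y ≠ 0) :
    ∀ j, ∀ y ∈ Ioo (0:ℝ) 2,
      deriv^[j] (fun z => (α * deriv^[3] f z) / (z + α * f z)) y
        = Bb α f j y / (y + α * f y) ^ (j+1) := by
  intro j
  induction j with
  | zero => intro y _; simp [Bb]
  | succ j ih =>
    intro y hy
    rw [Function.iterate_succ_apply']
    have hev : deriv^[j] (fun z => (α * deriv^[3] f z) / (z + α * f z))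
        =ᶠ[nhds y] fun z => Bb α f j z / (z + α * f z) ^ (j+1) := by
      filter_upwards [isOpen_Ioo.mem_nhds hy] with z hz
      exact ih z hz
    rw [hev.deriv_eq]
    have hdiff : Differentiable ℝ f := hf.differentiable (by simp)
    have hμ : HasDerivAt (fun z => z + α * f z) (1 + α * deriv f y) y :=
      (hasDerivAt_id y).add (((hdiff y).hasDerivAt).const_mul α)
    have hμp : HasDerivAt (fun z => (z + α * f z) ^ (j+1))
        (((j:ℝ)+1) * (y + α * f y) ^ j * (1 + α * deriv f y)) y := by
      have := hμ.fun_pow (j+1)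
      simpa using this
    have hB : DifferentiableAt ℝ (Bb α f j) y :=
      (Bb_contDiff α f hf j).differentiable (by simp) y
    have hney := hne y hy
    have hpow : (y + α * f y) ^ (j+1) ≠ 0 := pow_ne_zero _ hney
    rw [deriv_fun_div hB hμp.differentiableAt hpow, hμp.deriv]
    show _ = Bb α f (j+1) y / _
    rw [Bb]
    rw [div_eq_div_iff (by positivity) (pow_ne_zero _ hney)]
    ring
set_option maxHeartbeats 2000000 in
set_option maxRecDepth 8000 in
open scoped ContDiff in
/-- the perturbed Couette flow `μ = y + α μ̃` satisfies the hypotheses of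
the main theorem with `‖μ'''/μ‖_{W^{100,∞}} ≤ C α`. -/
theorem stmt11 (N₀ : ℕ) (hN₀ : 104 ≤ N₀)
    (μt : ℝ → ℝ) (hμt : ContDiff ℝ (⊤ : ℕ∞) μt)
    (hvan : ∀ k ≤ N₀, deriv^[k] μt 0 = 0 ∧ deriv^[k] μt 2 = 0) :
    ∃ α₀ C : ℝ, 0 < α₀ ∧ 0 < C ∧
    ∀ α : ℝ, 0 < α → α ≤ α₀ →
      (0 : ℝ) + α * μt 0 = 0 ∧
      (2 : ℝ) + α * μt 2 = 2 ∧
      (∀ y ∈ Ioc (0:ℝ) 2, 0 < y + α * μt y) ∧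
      0 < deriv (fun y => y + α * μt y) 0 ∧
      0 < |deriv (fun y => y + α * μt y) 2| ∧
      W100 (fun y => deriv^[3] (fun t => t + α * μt t) y / (y + α * μt y)) ≤ C * α := by
  have hs : ContDiff ℝ ∞ μt := hμt.of_le (by simp)
  have hdiff : Differentiable ℝ μt := hs.differentiable (by simp)
  have hdd : Differentiable ℝ (deriv μt) :=
    (contDiff_infty_iff_deriv.mp hs).2.differentiable (by simp)
  -- a uniform bound `K` for the first 104 derivatives of μ̃ on [0,2]
  obtain ⟨K, hK1, hKb⟩ : ∃ K : ℝ, 1 ≤ K ∧ ∀ i ≤ 104, ∀ y ∈ Icc (0:ℝ) 2, |deriv^[i] μt y| ≤ K := by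
    have hcont : ContinuousOn (fun y => ∑ i ∈ Finset.range 105, |deriv^[i] μt y|)
        (Icc (0:ℝ) 2) := by
      apply Continuous.continuousOn
      exact continuous_finset_sum _ (fun i _ => ((hs.iterate_deriv i).continuous).abs)
    obtain ⟨M, hM⟩ := (isCompact_Icc).exists_bound_of_continuousOn hcont
    refine ⟨max M 1, le_max_right _ _, fun i hi y hy => ?_⟩
    have h1 : |deriv^[i] μt y| ≤ ∑ k ∈ Finset.range 105, |deriv^[k] μt y| :=
      Finset.single_le_sum (f := fun k => |deriv^[k] μt y|) (fun k _ => abs_nonneg _)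
        (Finset.mem_range.mpr (by omega))
    have h2 := hM y hy
    rw [Real.norm_eq_abs] at h2
    have h3 : ∑ k ∈ Finset.range 105, |deriv^[k] μt y| ≤ M := le_trans (le_abs_self _) h2
    exact le_trans h1 (le_trans h3 (le_max_left _ _))
  have hK0 : (0:ℝ) < K := lt_of_lt_of_le one_pos hK1
  set E : ℝ := 2^250 * K with hE
  have hE1 : (1:ℝ) ≤ E := by
    have h1 : (1:ℝ) ≤ 2^250 := by norm_num
    nlinarith
  refine ⟨1/(2*K), K * E^100 * 2^201 + 1, by positivity, by positivity, ?_⟩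
  intro α hα0 hα
  have hαK : α * K ≤ 1/2 := by
    have := mul_le_mul_of_nonneg_right hα hK0.le
    calc α * K ≤ 1/(2*K) * K := this
    _ = 1/2 := by field_simp
  have μt0 : μt 0 = 0 := by simpa using (hvan 0 (by omega)).1
  have μt2 : μt 2 = 0 := by simpa using (hvan 0 (by omega)).2
  have dμt0 : deriv μt 0 = 0 := by simpa using (hvan 1 (by omega)).1
  have dμt2 : deriv μt 2 = 0 := by simpa using (hvan 1 (by omega)).2
  have hμder : ∀ y : ℝ, HasDerivAt (fun z => z + α * μt z) (1 + α * deriv μt y) y :=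
    fun y => (hasDerivAt_id y).add (((hdiff y).hasDerivAt).const_mul α)
  have hbd1 : ∀ y ∈ Icc (0:ℝ) 2, |deriv μt y| ≤ K := by
    intro y hy; simpa using hKb 1 (by omega) y hy
  -- lower bound μ ≥ y/2 on [0,2]
  have hlow : ∀ y ∈ Icc (0:ℝ) 2, y/2 ≤ y + α * μt y := by
    intro y hy
    have hmono : MonotoneOn (fun z => z/2 + α * μt z) (Icc (0:ℝ) 2) := by
      have hder : ∀ z : ℝ, HasDerivAt (fun w : ℝ => w/2 + α * μt w) (1/2 + α * deriv μt z) z := by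
        intro z
        have h1 : HasDerivAt (fun w : ℝ => w/2) ((1:ℝ)/2) z := by
          simpa using (hasDerivAt_id z).div_const 2
        exact h1.add (((hdiff z).hasDerivAt).const_mul α)
      apply monotoneOn_of_deriv_nonneg (convex_Icc 0 2)
      · exact ((continuous_id.div_const 2).add (continuous_const.mul hdiff.continuous)).continuousOn
      · exact fun z _ => ((hder z).differentiableAt).differentiableWithinAt
      · intro z hz
        rw [interior_Icc] at hz
        rw [(hder z).deriv]
        have := abs_le.mp (hbd1 z ⟨hz.1.le, hz.2.le⟩)
        nlinarith [hα0.le]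
    have h0 := hmono (by constructor <;> norm_num : (0:ℝ) ∈ Icc (0:ℝ) 2) hy hy.1
    simp only [μt0, mul_zero, add_zero] at h0
    have h0' : 0 ≤ y/2 + α * μt y := by simpa using h0
    linarith
  -- upper bound μ ≤ 2y on [0,2]
  have hup : ∀ y ∈ Icc (0:ℝ) 2, y + α * μt y ≤ 2*y := by
    intro y hy
    have hmono : MonotoneOn (fun z => z - α * μt z) (Icc (0:ℝ) 2) := by
      have hder : ∀ z : ℝ, HasDerivAt (fun w : ℝ => w - α * μt w) (1 - α * deriv μt z) z :=
        fun z => (hasDerivAt_id z).sub (((hdiff z).hasDerivAt).const_mul α)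
      apply monotoneOn_of_deriv_nonneg (convex_Icc 0 2)
      · exact (continuous_id.sub (continuous_const.mul hdiff.continuous)).continuousOn
      · exact fun z _ => ((hder z).differentiableAt).differentiableWithinAt
      · intro z hz
        rw [interior_Icc] at hz
        rw [(hder z).deriv]
        have := abs_le.mp (hbd1 z ⟨hz.1.le, hz.2.le⟩)
        nlinarith [hα0.le]
    have h0 := hmono (by constructor <;> norm_num : (0:ℝ) ∈ Icc (0:ℝ) 2) hy hy.1
    simp only [μt0, mul_zero, sub_zero] at h0
    have h0' : 0 ≤ y - α * μt y := by simpa using h0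
    linarith
  have hpos : ∀ y ∈ Ioc (0:ℝ) 2, 0 < y + α * μt y := by
    intro y hy
    have := hlow y ⟨hy.1.le, hy.2⟩
    linarith [hy.1]
  have hne : ∀ y ∈ Ioo (0:ℝ) 2, y + α * μt y ≠ 0 :=
    fun y hy => (hpos y ⟨hy.1, hy.2.le⟩).ne'
  -- derivative formulas for μ and ν = μ'
  have e1 : deriv (fun z => z + α * μt z) = fun z => 1 + α * deriv μt z :=
    funext fun z => (hμder z).deriv
  have hν : ∀ z : ℝ, HasDerivAt (fun w => 1 + α * deriv μt w) (α * deriv^[2] μt z) z := by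
    intro z
    have h := ((hdd z).hasDerivAt).const_mul α
    have h2 : deriv (deriv μt) z = deriv^[2] μt z := rfl
    rw [h2] at h
    exact h.const_add 1
  have e2 : deriv (fun z => 1 + α * deriv μt z) = fun z => α * deriv^[2] μt z :=
    funext fun z => (hν z).deriv
  have hμiter : ∀ k : ℕ, deriv^[k+2] (fun z => z + α * μt z) = fun z => α * deriv^[k+2] μt z := by
    intro k
    calc deriv^[k+2] (fun z => z + α * μt z)
        = deriv^[k+1] (deriv (fun z => z + α * μt z)) :=
          Function.iterate_succ_apply deriv (k+1) _
      _ = deriv^[k+1] (fun z => 1 + α * deriv μt z) := by rw [e1]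
      _ = deriv^[k] (deriv (fun z => 1 + α * deriv μt z)) :=
          Function.iterate_succ_apply deriv k _
      _ = deriv^[k] (fun z => α * deriv^[2] μt z) := by rw [e2]
      _ = fun z => α * deriv^[k] (deriv^[2] μt) z :=
          funext fun z => my_iter_const_mul (deriv^[2] μt) (hs.iterate_deriv 2) α k z
      _ = fun z => α * deriv^[k+2] μt z := by
          funext z
          rw [show deriv^[k] (deriv^[2] μt) z = deriv^[k+2] μt z from
            (congrFun (Function.iterate_add_apply deriv k 2 μt) z).symm]
  have hμb : ∀ m, 1 ≤ m → m ≤ 104 → ∀ y ∈ Icc (0:ℝ) 2,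
      |deriv^[m] (fun z => z + α * μt z) y| ≤ 2*K := by
    intro m hm1 hm2 y hy
    by_cases hm : m = 1
    · subst hm
      rw [Function.iterate_one, e1]
      have h1 : |α * deriv μt y| ≤ α * K := by
        rw [abs_mul, abs_of_pos hα0]
        exact mul_le_mul_of_nonneg_left (hbd1 y hy) hα0.le
      calc |1 + α * deriv μt y| ≤ |(1:ℝ)| + |α * deriv μt y| := abs_add_le _ _
        _ ≤ 1 + α * K := by rw [abs_one]; linarith
        _ ≤ 2*K := by linarith
    · obtain ⟨k, rfl⟩ : ∃ k, m = k + 2 := ⟨m - 2, by omega⟩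
      rw [hμiter k]
      have h1 : |α * deriv^[k+2] μt y| ≤ α * K := by
        rw [abs_mul, abs_of_pos hα0]
        exact mul_le_mul_of_nonneg_left (hKb (k+2) (by omega) y hy) hα0.le
      linarith
  have hνb : ∀ m, m ≤ 103 → ∀ y ∈ Icc (0:ℝ) 2,
      |deriv^[m] (fun z => 1 + α * deriv μt z) y| ≤ 2*K := by
    intro m hm y hy
    rcases Nat.eq_zero_or_pos m with rfl | hm1
    · simp only [Function.iterate_zero, id_eq]
      have h1 : |α * deriv μt y| ≤ α * K := by
        rw [abs_mul, abs_of_pos hα0]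
        exact mul_le_mul_of_nonneg_left (hbd1 y hy) hα0.le
      calc |1 + α * deriv μt y| ≤ |(1:ℝ)| + |α * deriv μt y| := abs_add_le _ _
        _ ≤ 1 + α * K := by rw [abs_one]; linarith
        _ ≤ 2*K := by linarith
    · obtain ⟨k, rfl⟩ : ∃ k, m = k + 1 := ⟨m - 1, by omega⟩
      have hr : deriv^[k+1] (fun z => 1 + α * deriv μt z) y = α * deriv^[k+2] μt y := by
        calc deriv^[k+1] (fun z => 1 + α * deriv μt z) y
            = deriv^[k] (deriv (fun z => 1 + α * deriv μt z)) y := by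
              rw [Function.iterate_succ_apply]
          _ = deriv^[k] (fun z => α * deriv^[2] μt z) y := by rw [e2]
          _ = α * deriv^[k] (deriv^[2] μt) y :=
              my_iter_const_mul (deriv^[2] μt) (hs.iterate_deriv 2) α k y
          _ = α * deriv^[k+2] μt y := by
              rw [show deriv^[k] (deriv^[2] μt) y = deriv^[k+2] μt y from
                (congrFun (Function.iterate_add_apply deriv k 2 μt) y).symm]
      rw [hr]
      have h1 : |α * deriv^[k+2] μt y| ≤ α * K := by
        rw [abs_mul, abs_of_pos hα0]
        exact mul_le_mul_of_nonneg_left (hKb (k+2) (by omega) y hy) hα0.le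
      linarith
  -- smoothness
  have hμc : ContDiff ℝ ∞ (fun z => z + α * μt z) := contDiff_id.add (contDiff_const.mul hs)
  have hνc : ContDiff ℝ ∞ (fun z => 1 + α * deriv μt z) :=
    contDiff_const.add (contDiff_const.mul (contDiff_infty_iff_deriv.mp hs).2)
  have hBc : ∀ j, ContDiff ℝ ∞ (Bb α μt j) := Bb_contDiff α μt hs
  -- the key derivative bounds for the numerators Bb
  have SB : ∀ j, j ≤ 100 → ∀ i, i ≤ 101 - j → ∀ y ∈ Icc (0:ℝ) 2,
      |deriv^[i] (Bb α μt j) y| ≤ K * E^j * α * y^(101-i) := by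
    intro j
    induction j with
    | zero =>
      intro _ i hi y hy
      have hrw : deriv^[i] (Bb α μt 0) y = α * deriv^[i] (deriv^[3] μt) y := by
        show deriv^[i] (fun z => α * deriv^[3] μt z) y = _
        exact my_iter_const_mul (deriv^[3] μt) (hs.iterate_deriv 3) α i y
      have hrw2 : deriv^[i] (deriv^[3] μt) y = deriv^[i+3] μt y :=
        (congrFun (Function.iterate_add_apply deriv i 3 μt) y).symm
      have ht : ∀ y ∈ Icc (0:ℝ) 2, |deriv^[i+3] μt y| ≤ K * y^(101-i) := by
        apply my_taylor_bound (101-i) (deriv^[i+3] μt) (hs.iterate_deriv _) ?_ K (by linarith) ?_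
        · intro r hr
          rw [show deriv^[r] (deriv^[i+3] μt) 0 = deriv^[r+(i+3)] μt 0 from
            (congrFun (Function.iterate_add_apply deriv r (i+3) μt) 0).symm]
          exact (hvan (r + (i+3)) (by omega)).1
        · intro z hz
          rw [show deriv^[101-i] (deriv^[i+3] μt) z = deriv^[(101-i)+(i+3)] μt z from
            (congrFun (Function.iterate_add_apply deriv (101-i) (i+3) μt) z).symm,
            show (101-i)+(i+3) = 104 by omega]
          exact hKb 104 le_rfl z hz
      calc |deriv^[i] (Bb α μt 0) y| = α * |deriv^[i+3] μt y| := by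
            rw [hrw, hrw2, abs_mul, abs_of_pos hα0]
        _ ≤ α * (K * y^(101-i)) := mul_le_mul_of_nonneg_left (ht y hy) hα0.le
        _ = K * E^0 * α * y^(101-i) := by rw [pow_zero]; ring
    | succ j ih =>
      intro hj i hi y hy
      have hj' : j ≤ 100 := by omega
      have hBj := ih hj'
      have hBjc := hBc j
      have hdBjc : ContDiff ℝ ∞ (deriv (Bb α μt j)) := (contDiff_infty_iff_deriv.mp hBjc).2
      have hD0 : (0:ℝ) < K * E^j := by positivity
      have hy0 : (0:ℝ) ≤ y := hy.1
      have hfun : Bb α μt (j+1) = fun z => (deriv (Bb α μt j) z * (z + α * μt z))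
          - (((j:ℝ)+1) * (Bb α μt j z * (1 + α * deriv μt z))) := by
        funext z
        show deriv (Bb α μt j) z * (z + α * μt z)
          - ((j:ℝ)+1) * Bb α μt j z * (1 + α * deriv μt z) = _
        ring
      rw [hfun]
      have key : deriv^[i] (fun z => (deriv (Bb α μt j) z * (z + α * μt z))
            - (((j:ℝ)+1) * (Bb α μt j z * (1 + α * deriv μt z)))) y
          = deriv^[i] (fun z => deriv (Bb α μt j) z * (z + α * μt z)) y
            - deriv^[i] (fun z => ((j:ℝ)+1) * (Bb α μt j z * (1 + α * deriv μt z))) y :=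
        my_iter_sub _ _ (hdBjc.mul hμc) (contDiff_const.mul (hBjc.mul hνc)) i y
      rw [key]
      set c1 : ℝ := 2^102 * K * (K * E^j) * α * y^(101-i) with hc1
      have t1 : |deriv^[i] (fun z => deriv (Bb α μt j) z * (z + α * μt z)) y| ≤ 2^i * c1 := by
        apply my_leibniz_abs_le (deriv (Bb α μt j)) (fun z => z + α * μt z) hdBjc hμc i y c1
        intro k hk
        have hk1 : |deriv^[k] (deriv (Bb α μt j)) y| ≤ K * E^j * α * y^(100-k) := by
          have h := hBj (k+1) (by omega) y hy
          rw [Function.iterate_succ_apply, show 101-(k+1) = 100-k by omega] at h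
          exact h
        rcases eq_or_lt_of_le hk with rfl | hki
        · simp only [Nat.sub_self, Function.iterate_zero, id_eq]
          have hμy : |y + α * μt y| ≤ 2*y := by
            rw [abs_of_nonneg (by linarith [hlow y hy])]
            exact hup y hy
          have hyk : y^(100-k) * y = y^(101-k) := by
            rw [← pow_succ]; congr 1; omega
          calc |deriv^[k] (deriv (Bb α μt j)) y| * |y + α * μt y|
              ≤ (K * E^j * α * y^(100-k)) * (2*y) :=
                mul_le_mul hk1 hμy (abs_nonneg _) (by positivity)
            _ = 2 * (K * E^j * α) * (y^(100-k) * y) := by ring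
            _ = 2 * (K * E^j * α) * y^(101-k) := by rw [hyk]
            _ ≤ c1 := by
                rw [hc1]
                have h2 : (2:ℝ) ≤ 2^102 * K := by nlinarith [show (2:ℝ) ≤ 2^102 by norm_num]
                nlinarith [pow_nonneg hy0 (101-k), mul_pos hD0 hα0,
                  mul_nonneg (mul_pos hD0 hα0).le (pow_nonneg hy0 (101-k))]
        · have hμk : |deriv^[i-k] (fun z => z + α * μt z) y| ≤ 2*K :=
            hμb (i-k) (by omega) (by omega) y hy
          have hyy : y^(100-k) ≤ 2^101 * y^(101-i) :=
            my_pow_le_big (101-i) (100-k) (by omega) (by omega) y hy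
          calc |deriv^[k] (deriv (Bb α μt j)) y| * |deriv^[i-k] (fun z => z + α * μt z) y|
              ≤ (K * E^j * α * y^(100-k)) * (2*K) :=
                mul_le_mul hk1 hμk (abs_nonneg _) (by positivity)
            _ = (K * E^j * α * (2*K)) * y^(100-k) := by ring
            _ ≤ (K * E^j * α * (2*K)) * (2^101 * y^(101-i)) :=
                mul_le_mul_of_nonneg_left hyy (by positivity)
            _ = c1 := by rw [hc1]; ring
      have t2' : |deriv^[i] (fun z => Bb α μt j z * (1 + α * deriv μt z)) y| ≤ 2^i * c1 := by
        apply my_leibniz_abs_le (Bb α μt j) (fun z => 1 + α * deriv μt z) hBjc hνc i y c1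
        intro k hk
        have hk1 : |deriv^[k] (Bb α μt j) y| ≤ K * E^j * α * y^(101-k) :=
          hBj k (by omega) y hy
        have hν2 : |deriv^[i-k] (fun z => 1 + α * deriv μt z) y| ≤ 2*K :=
          hνb (i-k) (by omega) y hy
        have hyy : y^(101-k) ≤ 2^101 * y^(101-i) :=
          my_pow_le_big (101-i) (101-k) (by omega) (by omega) y hy
        calc |deriv^[k] (Bb α μt j) y| * |deriv^[i-k] (fun z => 1 + α * deriv μt z) y|
            ≤ (K * E^j * α * y^(101-k)) * (2*K) :=
              mul_le_mul hk1 hν2 (abs_nonneg _) (by positivity)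
          _ = (K * E^j * α * (2*K)) * y^(101-k) := by ring
          _ ≤ (K * E^j * α * (2*K)) * (2^101 * y^(101-i)) :=
              mul_le_mul_of_nonneg_left hyy (by positivity)
          _ = c1 := by rw [hc1]; ring
      have t2 : |deriv^[i] (fun z => ((j:ℝ)+1) * (Bb α μt j z * (1 + α * deriv μt z))) y|
          ≤ 101 * (2^i * c1) := by
        have hcm : deriv^[i] (fun z => ((j:ℝ)+1) * (Bb α μt j z * (1 + α * deriv μt z))) y
            = ((j:ℝ)+1) * deriv^[i] (fun z => Bb α μt j z * (1 + α * deriv μt z)) y :=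
          my_iter_const_mul _ (hBjc.mul hνc) _ i y
        rw [hcm, abs_mul]
        have hj101 : |(j:ℝ)+1| ≤ 101 := by
          rw [abs_of_nonneg (by positivity)]
          have : (j:ℝ) ≤ 100 := by exact_mod_cast hj'
          linarith
        exact mul_le_mul hj101 t2' (abs_nonneg _) (by norm_num)
      have hc10 : (0:ℝ) ≤ c1 := by rw [hc1]; positivity
      have h2i : (2:ℝ)^i ≤ 2^101 := pow_le_pow_right₀ (by norm_num) (by omega)
      calc |deriv^[i] (fun z => deriv (Bb α μt j) z * (z + α * μt z)) y
            - deriv^[i] (fun z => ((j:ℝ)+1) * (Bb α μt j z * (1 + α * deriv μt z))) y|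
          ≤ |deriv^[i] (fun z => deriv (Bb α μt j) z * (z + α * μt z)) y|
            + |deriv^[i] (fun z => ((j:ℝ)+1) * (Bb α μt j z * (1 + α * deriv μt z))) y| :=
            abs_sub _ _
        _ ≤ 2^i * c1 + 101 * (2^i * c1) := add_le_add t1 t2
        _ = 102 * (2^i * c1) := by ring
        _ ≤ 102 * (2^101 * c1) := by nlinarith
        _ = (102 * 2^101 * 2^102) * (K * (K * E^j) * α * y^(101-i)) := by rw [hc1]; ring
        _ ≤ 2^250 * (K * (K * E^j) * α * y^(101-i)) := by
            apply mul_le_mul_of_nonneg_right (by norm_num) (by positivity)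
        _ = K * E^(j+1) * α * y^(101-i) := by rw [pow_succ, hE]; ring
  -- the pointwise bound for all the derivatives of μ'''/μ
  have hd3 : deriv^[3] (fun t => t + α * μt t) = fun z => α * deriv^[3] μt z := by
    have := hμiter 1
    rwa [show (1:ℕ)+2 = 3 from rfl] at this
  have hrepl : (fun y => deriv^[3] (fun t => t + α * μt t) y / (y + α * μt y))
      = fun z => (α * deriv^[3] μt z) / (z + α * μt z) := by
    rw [hd3]
  have hbound : ∀ j ≤ 100, ∀ y ∈ Ioo (0:ℝ) 2,
      |deriv^[j] (fun z => (α * deriv^[3] μt z) / (z + α * μt z)) y|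
        ≤ (K * E^100 * 2^201) * α := by
    intro j hj y hy
    have hy0 : (0:ℝ) < y := hy.1
    rw [Bb_rep α μt hs hne j y hy]
    have hμy : (0:ℝ) < y + α * μt y := hpos y ⟨hy.1, hy.2.le⟩
    have hylow : y/2 ≤ y + α * μt y := hlow y ⟨hy.1.le, hy.2.le⟩
    have hy2 : (0:ℝ) < y/2 := by linarith [hy.1]
    rw [abs_div, abs_of_pos (pow_pos hμy (j+1))]
    have hnum : |Bb α μt j y| ≤ K * E^j * α * y^101 := by
      have := SB j hj 0 (by omega) y ⟨hy.1.le, hy.2.le⟩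
      simpa using this
    have hden : (y/2)^(j+1) ≤ (y + α * μt y)^(j+1) := pow_le_pow_left₀ hy2.le hylow _
    have hden0 : (0:ℝ) < (y/2)^(j+1) := by positivity
    have step1 : |Bb α μt j y| / (y + α * μt y)^(j+1) ≤ (K * E^j * α * y^101) / (y/2)^(j+1) :=
      div_le_div₀ (by positivity) hnum hden0 hden
    refine step1.trans ?_
    have hsplit : y^101 = y^(100-j) * y^(j+1) := by
      rw [← pow_add]; congr 1; omega
    have hyne : y ≠ 0 := hy.1.ne'
    have step2 : (K * E^j * α * y^101) / (y/2)^(j+1)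
        = K * E^j * α * (2^(j+1) * y^(100-j)) := by
      rw [hsplit, div_pow]
      field_simp
    rw [step2]
    have b1 : E^j ≤ E^100 := pow_le_pow_right₀ hE1 (by omega)
    have b2 : (2:ℝ)^(j+1) ≤ 2^101 := pow_le_pow_right₀ (by norm_num) (by omega)
    have b3 : y^(100-j) ≤ 2^100 := by
      calc y^(100-j) ≤ 2^(100-j) := pow_le_pow_left₀ hy.1.le hy.2.le _
        _ ≤ 2^100 := pow_le_pow_right₀ (by norm_num) (by omega)
    have hfin : (K * E^100 * 2^201) * α = K * E^100 * α * (2^101 * 2^100) := by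
      rw [show (2:ℝ)^101 * 2^100 = 2^201 by rw [← pow_add]]
      ring
    rw [hfin]
    have hb23 : (2:ℝ)^(j+1) * y^(100-j) ≤ 2^101 * 2^100 := by
      apply mul_le_mul b2 b3 (pow_nonneg hy.1.le _) (by positivity)
    have hb1 : K * E^j * α ≤ K * E^100 * α := by
      apply mul_le_mul_of_nonneg_right _ hα0.le
      exact mul_le_mul_of_nonneg_left b1 hK0.le
    calc K * E^j * α * (2^(j+1) * y^(100-j))
        ≤ (K * E^100 * α) * (2^(j+1) * y^(100-j)) := by
          apply mul_le_mul_of_nonneg_right hb1 (by positivity)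
      _ ≤ (K * E^100 * α) * (2^101 * 2^100) :=
          mul_le_mul_of_nonneg_left hb23 (by positivity)
  -- assemble everything
  refine ⟨by simp [μt0], by simp [μt2], hpos, ?_, ?_, ?_⟩
  · rw [(hμder 0).deriv, dμt0]; norm_num
  · rw [(hμder 2).deriv, dμt2]; norm_num
  · rw [hrepl]
    unfold W100
    apply csSup_le
    · exact ⟨|deriv^[0] (fun z => (α * deriv^[3] μt z) / (z + α * μt z)) 1|,
        0, by norm_num, 1, by constructor <;> norm_num, rfl⟩
    · rintro r ⟨j, hj, y, hy, rfl⟩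
      calc |deriv^[j] (fun z => (α * deriv^[3] μt z) / (z + α * μt z)) y|
          ≤ (K * E^100 * 2^201) * α := hbound j hj y hy
        _ ≤ (K * E^100 * 2^201 + 1) * α := by nlinarith
end
end

section
/- Let (u_s, v_s) be C¹ on the closure of Ω with ∂_x u_s + ∂_y v_s = 0 in Ω and v_s = 0 on {y = 0} ∪ {y = 2}. Let (u,v) be C¹ on the closure of Ω with u = v = 0 on {x = 0} ∪ {y = 0} ∪ {y = 2}. Then ∫_Ω ( u_s ∂_x u + (∂_x u_s) u + v_s ∂_y u ) u = ∫_Ω (∂_x u_s) u² + (1/2) ∫₀² u_s(L,y) u(L,y)² dy, and ∫_Ω ( u_s ∂_x v + v_s ∂_y v + (∂_y v_s) v ) v = ∫_Ω (∂_y v_s) v² + (1/2) ∫₀² u_s(L,y) v(L,y)² dy. -/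
/-!
Because `(u_s, v_s)` is divergence-free, `(u_s ∂ₓw + v_s ∂_y w) w = ½ div((u_s, v_s) w²)`.
By the divergence theorem on the rectangle, the flux of `(u_s, v_s) w²` through `{y = 0}` and
`{y = 2}` vanishes because `v_s` does there, the flux through `{x = 0}` vanishes because `w` does
there, and only the outflow `½ ∫₀² u_s(L,y) w(L,y)² dy` through `{x = L}` remains. Both identities
are this computation (for `w = u` and `w = v`) plus a zeroth-order term carried along unchanged.
-/

open MeasureTheory Set Real Function

noncomputable section

section PartialDerivatives

variable {f g : ℝ → ℝ → ℝ}

theorem hasDerivAt_fun_fst (hf : Differentiable ℝ (uncurry f)) (x y : ℝ) :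
    HasDerivAt (fun s => f s y) (fderiv ℝ (uncurry f) (x, y) (1, 0)) x := by
  have hline : HasDerivAt (fun s : ℝ => (s, y)) ((1 : ℝ), (0 : ℝ)) x :=
    (hasDerivAt_id x).prodMk (hasDerivAt_const x y)
  exact (hf (x, y)).hasFDerivAt.comp_hasDerivAt x hline

theorem hasDerivAt_fun_snd (hf : Differentiable ℝ (uncurry f)) (x y : ℝ) :
    HasDerivAt (fun t => f x t) (fderiv ℝ (uncurry f) (x, y) (0, 1)) y := by
  have hline : HasDerivAt (fun t : ℝ => (x, t)) ((0 : ℝ), (1 : ℝ)) y :=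
    (hasDerivAt_const y x).prodMk (hasDerivAt_id y)
  exact (hf (x, y)).hasFDerivAt.comp_hasDerivAt y hline

theorem pdx_eq_fderiv (hf : Differentiable ℝ (uncurry f)) (x y : ℝ) :
    pdx f x y = fderiv ℝ (uncurry f) (x, y) (1, 0) :=
  (hasDerivAt_fun_fst hf x y).deriv

theorem pdy_eq_fderiv (hf : Differentiable ℝ (uncurry f)) (x y : ℝ) :
    pdy f x y = fderiv ℝ (uncurry f) (x, y) (0, 1) :=
  (hasDerivAt_fun_snd hf x y).deriv

theorem continuous_pdx (hf : ContDiff ℝ 1 (uncurry f)) :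
    Continuous fun p : ℝ × ℝ => pdx f p.1 p.2 := by
  simp only [pdx_eq_fderiv (hf.differentiable one_ne_zero)]
  exact (hf.continuous_fderiv one_ne_zero).clm_apply continuous_const

theorem continuous_pdy (hf : ContDiff ℝ 1 (uncurry f)) :
    Continuous fun p : ℝ × ℝ => pdy f p.1 p.2 := by
  simp only [pdy_eq_fderiv (hf.differentiable one_ne_zero)]
  exact (hf.continuous_fderiv one_ne_zero).clm_apply continuous_const

theorem pdx_mul (hf : Differentiable ℝ (uncurry f)) (hg : Differentiable ℝ (uncurry g))
    (x y : ℝ) :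
    pdx (fun x y => f x y * g x y) x y = pdx f x y * g x y + f x y * pdx g x y :=
  deriv_mul (hasDerivAt_fun_fst hf x y).differentiableAt
    (hasDerivAt_fun_fst hg x y).differentiableAt

theorem pdy_mul (hf : Differentiable ℝ (uncurry f)) (hg : Differentiable ℝ (uncurry g))
    (x y : ℝ) :
    pdy (fun x y => f x y * g x y) x y = pdy f x y * g x y + f x y * pdy g x y :=
  deriv_mul (hasDerivAt_fun_snd hf x y).differentiableAt
    (hasDerivAt_fun_snd hg x y).differentiableAt

theorem contDiff_uncurry_mul {n : WithTop ℕ∞} (hf : ContDiff ℝ n (uncurry f))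
    (hg : ContDiff ℝ n (uncurry g)) : ContDiff ℝ n (uncurry fun x y => f x y * g x y) :=
  hf.mul hg

end PartialDerivatives

theorem setIntegral_Ioo_prod_Ioo_pdx_add_pdy {f g : ℝ → ℝ → ℝ}
    (hf : ContDiff ℝ 1 (uncurry f)) (hg : ContDiff ℝ 1 (uncurry g))
    {a₁ a₂ b₁ b₂ : ℝ} (h₁ : a₁ ≤ b₁) (h₂ : a₂ ≤ b₂) :
    ∫ p in Ioo a₁ b₁ ×ˢ Ioo a₂ b₂, pdx f p.1 p.2 + pdy g p.1 p.2 =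
      (((∫ x in a₁..b₁, g x b₂) - ∫ x in a₁..b₁, g x a₂) + ∫ y in a₂..b₂, f b₁ y) -
        ∫ y in a₂..b₂, f a₁ y := by
  have hdiv_cont : Continuous fun p : ℝ × ℝ =>
      fderiv ℝ (uncurry f) p (1, 0) + fderiv ℝ (uncurry g) p (0, 1) :=
    ((hf.continuous_fderiv one_ne_zero).clm_apply continuous_const).add
      ((hg.continuous_fderiv one_ne_zero).clm_apply continuous_const)
  have hIoo_ae_Icc : (Ioo a₁ b₁ ×ˢ Ioo a₂ b₂ : Set (ℝ × ℝ)) =ᵐ[volume] Icc (a₁, a₂) (b₁, b₂) := by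
    rw [← Icc_prod_Icc]
    exact Measure.set_prod_ae_eq Ioo_ae_eq_Icc Ioo_ae_eq_Icc
  simp only [pdx_eq_fderiv (hf.differentiable one_ne_zero),
    pdy_eq_fderiv (hg.differentiable one_ne_zero)]
  rw [setIntegral_congr_set hIoo_ae_Icc]
  exact integral_divergence_prod_Icc_of_hasFDerivAt_of_le (uncurry f) (uncurry g)
    (fderiv ℝ (uncurry f)) (fderiv ℝ (uncurry g)) (a₁, a₂) (b₁, b₂) ⟨h₁, h₂⟩
    hf.continuous.continuousOn hg.continuous.continuousOn
    (fun p _ => ((hf.differentiable one_ne_zero) p).hasFDerivAt)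
    (fun p _ => ((hg.differentiable one_ne_zero) p).hasFDerivAt)
    (hdiv_cont.continuousOn.integrableOn_compact isCompact_Icc)

theorem intO_transport_mul_self {L : ℝ} (hL : 0 ≤ L) {us vs w : ℝ → ℝ → ℝ}
    (hus : ContDiff ℝ 1 (uncurry us)) (hvs : ContDiff ℝ 1 (uncurry vs))
    (hw : ContDiff ℝ 1 (uncurry w))
    (hdivs : ∀ p ∈ Omg L, pdx us p.1 p.2 + pdy vs p.1 p.2 = 0)
    (hvs0 : ∀ x ∈ Icc (0:ℝ) L, vs x 0 = 0 ∧ vs x 2 = 0)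
    (hw0 : ∀ y ∈ Icc (0:ℝ) 2, w 0 y = 0) :
    intO L (fun x y => (us x y * pdx w x y + vs x y * pdy w x y) * w x y)
      = (1/2) * ∫ y in Ioo (0:ℝ) 2, us L y * (w L y)^2 := by
  have hus' := hus.differentiable one_ne_zero
  have hvs' := hvs.differentiable one_ne_zero
  have hw' := hw.differentiable one_ne_zero
  have hww := contDiff_uncurry_mul hw hw
  have hflux : ∀ p ∈ Omg L,
      (us p.1 p.2 * pdx w p.1 p.2 + vs p.1 p.2 * pdy w p.1 p.2) * w p.1 p.2 =
        (1/2) * (pdx (fun x y => us x y * (w x y * w x y)) p.1 p.2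
          + pdy (fun x y => vs x y * (w x y * w x y)) p.1 p.2) := by
    intro p hp
    rw [pdx_mul hus' (hww.differentiable one_ne_zero),
      pdy_mul hvs' (hww.differentiable one_ne_zero), pdx_mul hw' hw',
      pdy_mul hw' hw']
    linear_combination (-(w p.1 p.2 ^ 2) / 2) * hdivs p hp
  have htop : ∫ x in (0:ℝ)..L, vs x 2 * (w x 2 * w x 2) = 0 :=
    intervalIntegral.integral_zero_ae <| .of_forall fun x hx => by
      simp [(hvs0 x (uIcc_of_le hL ▸ uIoc_subset_uIcc hx)).2]
  have hbot : ∫ x in (0:ℝ)..L, vs x 0 * (w x 0 * w x 0) = 0 :=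
    intervalIntegral.integral_zero_ae <| .of_forall fun x hx => by
      simp [(hvs0 x (uIcc_of_le hL ▸ uIoc_subset_uIcc hx)).1]
  have hinflow : ∫ y in (0:ℝ)..2, us 0 y * (w 0 y * w 0 y) = 0 :=
    intervalIntegral.integral_zero_ae <| .of_forall fun y hy => by
      simp [hw0 y (uIcc_of_le (zero_le_two : (0:ℝ) ≤ 2) ▸ uIoc_subset_uIcc hy)]
  calc intO L (fun x y => (us x y * pdx w x y + vs x y * pdy w x y) * w x y)
      = ∫ p in Omg L, (1/2) * (pdx (fun x y => us x y * (w x y * w x y)) p.1 p.2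
          + pdy (fun x y => vs x y * (w x y * w x y)) p.1 p.2) :=
        setIntegral_congr_fun (measurableSet_Ioo.prod measurableSet_Ioo) hflux
    _ = (1/2) * ∫ y in (0:ℝ)..2, us L y * (w L y * w L y) := by
        rw [integral_const_mul, Omg, setIntegral_Ioo_prod_Ioo_pdx_add_pdy
          (contDiff_uncurry_mul hus hww)
          (contDiff_uncurry_mul hvs hww) hL zero_le_two, htop, hbot, hinflow]
        ring
    _ = (1/2) * ∫ y in Ioo (0:ℝ) 2, us L y * (w L y)^2 := by
        rw [intervalIntegral.integral_of_le zero_le_two, integral_Ioc_eq_integral_Ioo]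
        simp only [sq]

theorem integrableOn_Omg {f : ℝ × ℝ → ℝ} (hf : Continuous f) (L : ℝ) :
    IntegrableOn f (Omg L) :=
  (hf.continuousOn.integrableOn_compact (isCompact_Icc.prod isCompact_Icc)).mono_set
    (prod_mono Ioo_subset_Icc_self Ioo_subset_Icc_self)

theorem intO_transport_mul_self_add {L : ℝ} (hL : 0 ≤ L) {us vs w c : ℝ → ℝ → ℝ}
    (hus : ContDiff ℝ 1 (uncurry us)) (hvs : ContDiff ℝ 1 (uncurry vs))
    (hw : ContDiff ℝ 1 (uncurry w))
    (hdivs : ∀ p ∈ Omg L, pdx us p.1 p.2 + pdy vs p.1 p.2 = 0)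
    (hvs0 : ∀ x ∈ Icc (0:ℝ) L, vs x 0 = 0 ∧ vs x 2 = 0)
    (hw0 : ∀ y ∈ Icc (0:ℝ) 2, w 0 y = 0) (hc : Continuous fun p : ℝ × ℝ => c p.1 p.2) :
    intO L (fun x y => (us x y * pdx w x y + vs x y * pdy w x y) * w x y + c x y * (w x y)^2)
      = intO L (fun x y => c x y * (w x y)^2)
        + (1/2) * ∫ y in Ioo (0:ℝ) 2, us L y * (w L y)^2 := by
  have htransport := intO_transport_mul_self hL hus hvs hw hdivs hvs0 hw0
  have hw_cont : Continuous fun p : ℝ × ℝ => w p.1 p.2 := hw.continuous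
  have hT_int : IntegrableOn (fun p : ℝ × ℝ =>
      (us p.1 p.2 * pdx w p.1 p.2 + vs p.1 p.2 * pdy w p.1 p.2) * w p.1 p.2) (Omg L) :=
    integrableOn_Omg (((hus.continuous.mul (continuous_pdx hw)).add
      (hvs.continuous.mul (continuous_pdy hw))).mul hw_cont) L
  have hc_int : IntegrableOn (fun p : ℝ × ℝ => c p.1 p.2 * (w p.1 p.2)^2) (Omg L) :=
    integrableOn_Omg (hc.mul (hw_cont.pow 2)) L
  simp only [intO] at htransport ⊢
  rw [integral_add hT_int hc_int, htransport, add_comm]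

theorem stmt14_general (L : ℝ) (hL0 : 0 < L)
    (us vs u v : ℝ → ℝ → ℝ)
    (hus : ContDiff ℝ 1 (uncurry us)) (hvs : ContDiff ℝ 1 (uncurry vs))
    (hdivs : ∀ p ∈ Omg L, pdx us p.1 p.2 + pdy vs p.1 p.2 = 0)
    (hvs0 : ∀ x ∈ Icc (0:ℝ) L, vs x 0 = 0 ∧ vs x 2 = 0)
    (hu : ContDiff ℝ 1 (uncurry u)) (hv : ContDiff ℝ 1 (uncurry v))
    (hbcx0 : ∀ y ∈ Icc (0:ℝ) 2, u 0 y = 0 ∧ v 0 y = 0) :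
    (intO L (fun x y => (us x y * pdx u x y + pdx us x y * u x y + vs x y * pdy u x y) * u x y)
      = intO L (fun x y => pdx us x y * (u x y)^2)
        + (1/2) * ∫ y in Ioo (0:ℝ) 2, us L y * (u L y)^2) ∧
    (intO L (fun x y => (us x y * pdx v x y + vs x y * pdy v x y + pdy vs x y * v x y) * v x y)
      = intO L (fun x y => pdy vs x y * (v x y)^2)
        + (1/2) * ∫ y in Ioo (0:ℝ) 2, us L y * (v L y)^2) := by
  constructor
  · convert intO_transport_mul_self_add hL0.le hus hvs hu hdivs hvs0 (fun y hy => (hbcx0 y hy).1)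
      (continuous_pdx hus) using 2
    funext x y
    ring
  · convert intO_transport_mul_self_add hL0.le hus hvs hv hdivs hvs0 (fun y hy => (hbcx0 y hy).2)
      (continuous_pdy hvs) using 2
    funext x y
    ring

/-- identities for the convection terms. -/
theorem stmt14 (L : ℝ) (hL0 : 0 < L) (hL1 : L ≤ 1)
    (us vs u v : ℝ → ℝ → ℝ)
    (hus : ContDiff ℝ 1 (uncurry us)) (hvs : ContDiff ℝ 1 (uncurry vs))
    (hdivs : ∀ p ∈ Omg L, pdx us p.1 p.2 + pdy vs p.1 p.2 = 0)
    (hvs0 : ∀ x ∈ Icc (0:ℝ) L, vs x 0 = 0 ∧ vs x 2 = 0)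
    (hu : ContDiff ℝ 1 (uncurry u)) (hv : ContDiff ℝ 1 (uncurry v))
    (hbcx0 : ∀ y ∈ Icc (0:ℝ) 2, u 0 y = 0 ∧ v 0 y = 0)
    (hbcy : ∀ x ∈ Icc (0:ℝ) L, u x 0 = 0 ∧ v x 0 = 0 ∧ u x 2 = 0 ∧ v x 2 = 0) :
    (intO L (fun x y => (us x y * pdx u x y + pdx us x y * u x y + vs x y * pdy u x y) * u x y)
      = intO L (fun x y => pdx us x y * (u x y)^2)
        + (1/2) * ∫ y in Ioo (0:ℝ) 2, us L y * (u L y)^2) ∧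
    (intO L (fun x y => (us x y * pdx v x y + vs x y * pdy v x y + pdy vs x y * v x y) * v x y)
      = intO L (fun x y => pdy vs x y * (v x y)^2)
        + (1/2) * ∫ y in Ioo (0:ℝ) 2, us L y * (v L y)^2) :=
  stmt14_general L hL0 us vs u v hus hvs hdivs hvs0 hu hv hbcx0
end
end
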